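/- arXiv:math/0001126 — 6 statements merged into one kernel-verified Lean document; each statement's English description precedes it below -/
import Mathlib

section
/- Let V be a finite-dimensional complex vector space and c₁, c₂ ∈ Λ²V two bivectors, regarded as skew-symmetric linear maps c^♯ : V* → V. Let J = span{c₁,c₂}, let R₀ be the maximal rank of elements of J, and F₀ ⊂ V* the subspace spanned by the kernels of all elements of J of rank R₀. Then for any two nonzero a, b ∈ J one has a^♯(F₀) = b^♯(F₀). -/
/-!
If `x = α c + β y`, then `x` and `β • y` agree on `ker c`; hence a kernel of maximal rank
contributes the same subspace to `x (F₀)` and to `y (F₀)` unless the member `c` is proportional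
to `y`. That remaining contribution is recovered from the neighbouring members `c + t • x`:
the rank of a pencil drops only at finitely many parameters (a kernel vector is an eigenvector of
one fixed endomorphism), and applying this to the augmented pencil `(c + t • x, q ∘ x)`, with `q`
the quotient map by `y (F₀)`, shows that `q ∘ x` kills `ker c` once it kills `ker (c + t • x)`
for the generic `t`.
-/

open Module LinearMap Filter

section Pencil

variable {K X Y Z : Type*} [Field K] [AddCommGroup X] [Module K X]
  [AddCommGroup Y] [Module K Y] [AddCommGroup Z] [Module K Z]

theorem eventually_cofinite_injective_add_smul [FiniteDimensional K X] {f : X →ₗ[K] Y}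
    (hf : Function.Injective f) (g : X →ₗ[K] Y) :
    ∀ᶠ t : K in cofinite, Function.Injective (f + t • g) := by
  obtain ⟨h, hhf⟩ := f.exists_leftInverse_of_injective (ker_eq_bot.mpr hf)
  -- a nonzero kernel vector of `f + t • g` is an eigenvector of `h ∘ₗ g` for `-t⁻¹`
  have hfin : {t : K | Module.End.HasEigenvalue (h ∘ₗ g) (-t⁻¹)}.Finite :=
    (Module.End.finite_hasEigenvalue (h ∘ₗ g)).preimage fun a _ b _ hab => by simpa using hab
  filter_upwards [hfin.compl_mem_cofinite] with t ht
  rw [← ker_eq_bot, eq_bot_iff]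
  intro v hv
  have hv' : v + t • h (g v) = 0 := by
    simpa [show h (f v) = v from LinearMap.congr_fun hhf v] using congr_arg h hv
  by_contra hv0
  have ht0 : t ≠ 0 := by rintro rfl; simp_all
  refine ht (Module.End.hasEigenvalue_of_hasEigenvector ⟨?_, hv0⟩)
  rw [Module.End.mem_eigenspace_iff, comp_apply, ← inv_smul_smul₀ ht0 (h (g v)),
    eq_neg_of_add_eq_zero_right hv', smul_neg, neg_smul]

theorem eventually_cofinite_finrank_ker_add_smul_le [FiniteDimensional K X] (f g : X →ₗ[K] Y) :
    ∀ᶠ t : K in cofinite, finrank K (ker (f + t • g)) ≤ finrank K (ker f) := by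
  obtain ⟨S, hS⟩ := (ker f).exists_isCompl
  filter_upwards [eventually_cofinite_injective_add_smul
    (injective_domRestrict_iff.mpr hS.symm.disjoint) (g.domRestrict S)] with t ht
  have hdisj : Disjoint (ker (f + t • g)) S := by
    rw [Submodule.disjoint_def]
    intro v hv hvS
    simpa using @ht ⟨v, hvS⟩ 0 (by simpa using hv)
  have := Submodule.finrank_add_finrank_le_of_disjoint hdisj
  have := Submodule.finrank_add_eq_of_isCompl hS
  omega

theorem eventually_cofinite_finrank_range_le_add_smul [FiniteDimensional K X]
    (f g : X →ₗ[K] Y) :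
    ∀ᶠ t : K in cofinite, finrank K (range f) ≤ finrank K (range (f + t • g)) := by
  filter_upwards [eventually_cofinite_finrank_ker_add_smul_le f g] with t ht
  have := finrank_range_add_finrank_ker f
  have := finrank_range_add_finrank_ker (f + t • g)
  omega

theorem ker_le_ker_of_forall_finrank_range_eq [FiniteDimensional K X] [Infinite K]
    {A B : X →ₗ[K] Y} {L : X →ₗ[K] Z}
    (hmax : ∀ t : K, finrank K (range (A + t • B)) ≤ finrank K (range A))
    (hL : ∀ t : K, t ≠ 0 → finrank K (range (A + t • B)) = finrank K (range A) →
      ker (A + t • B) ≤ ker L) :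
    ker A ≤ ker L := by
  have hL' : ∀ᶠ t : K in cofinite, ker (A + t • B) ≤ ker L := by
    filter_upwards [eventually_cofinite_finrank_range_le_add_smul A B, eventually_cofinite_ne 0]
      with t hrank ht0
    exact hL t ht0 (le_antisymm (hmax t) hrank)
  -- the augmented pencil `(A + t • B, L)` has kernel `ker (A + t • B)` for generic `t`
  have hprod : ∀ t : K, A.prod L + t • B.prod 0 = (A + t • B).prod L := fun t => by ext <;> simp
  obtain ⟨t, ht, hLt⟩ :=
    ((eventually_cofinite_finrank_ker_add_smul_le (A.prod L) (B.prod 0)).and hL').exists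
  rw [hprod, LinearMap.ker_prod, LinearMap.ker_prod, inf_eq_left.mpr hLt] at ht
  have := finrank_range_add_finrank_ker A
  have := finrank_range_add_finrank_ker (A + t • B)
  have hker : ker A ⊓ ker L = ker A :=
    Submodule.eq_of_le_of_finrank_le inf_le_left (by linarith [hmax t])
  exact hker ▸ inf_le_right

theorem map_ker_le_map_ker_of_mem_span_pair {c y x : X →ₗ[K] Y}
    (hx : x ∈ Submodule.span K {c, y}) : (ker c).map x ≤ (ker c).map y := by
  obtain ⟨α, β, rfl⟩ := Submodule.mem_span_pair.mp hx
  rintro _ ⟨v, hv, rfl⟩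
  exact ⟨β • v, Submodule.smul_mem _ β hv, by simp_all⟩

end Pencil

theorem Submodule.mem_span_pair_of_notMem_span_singleton {K E : Type*} [Field K]
    [AddCommGroup E] [Module K E] {c₁ c₂ c y x : E} (hc : c ∈ span K {c₁, c₂})
    (hy : y ∈ span K {c₁, c₂}) (hx : x ∈ span K {c₁, c₂}) (hy0 : y ≠ 0) (hcy : c ∉ K ∙ y) :
    x ∈ span K {c, y} := by
  classical
  have hind : LinearIndependent K ![y, c] :=
    (LinearIndependent.pair_iff' hy0).mpr fun a h => hcy (mem_span_singleton.mpr ⟨a, h⟩)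
  have hrank : finrank K (span K {c, y}) = 2 := by
    have := finrank_span_eq_card hind
    rwa [Matrix.range_cons, Matrix.range_cons_empty, Set.singleton_union, Set.pair_comm,
      Fintype.card_fin] at this
  have hle : span K {c, y} ≤ span K {c₁, c₂} := span_le.mpr (Set.insert_subset hc (by simpa))
  have := FiniteDimensional.span_of_finite K (Set.toFinite {c₁, c₂})
  have heq := eq_of_le_of_finrank_le hle <| hrank ▸
    (finrank_span_le_card ({c₁, c₂} : Set E)).trans (by simpa using Finset.card_le_two)
  exact heq ▸ hx

theorem stmt0_general (V : Type*) [AddCommGroup V] [Module ℂ V] [FiniteDimensional ℂ V]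
    (c₁ c₂ : Module.Dual ℂ V →ₗ[ℂ] V)
    (J : Submodule ℂ (Module.Dual ℂ V →ₗ[ℂ] V)) (hJ : J = Submodule.span ℂ {c₁, c₂})
    (R₀ : ℕ)
    (hR₀le : ∀ c ∈ J, finrank ℂ (LinearMap.range c) ≤ R₀)
    (F₀ : Submodule ℂ (Module.Dual ℂ V))
    (hF₀ : F₀ = Submodule.span ℂ
      (⋃ c ∈ {c | c ∈ J ∧ finrank ℂ (LinearMap.range c) = R₀},
        (LinearMap.ker c : Set (Module.Dual ℂ V))))
    (a b : Module.Dual ℂ V →ₗ[ℂ] V) (ha : a ∈ J) (hb : b ∈ J)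
    (ha0 : a ≠ 0) (hb0 : b ≠ 0) :
    F₀.map a = F₀.map b := by
  suffices key : ∀ x ∈ J, ∀ y ∈ J, y ≠ 0 → F₀.map x ≤ F₀.map y from
    le_antisymm (key a ha b hb hb0) (key b hb a ha ha0)
  intro x hx y hy hy0
  have hpair : ∀ c ∈ J, finrank ℂ (range c) = R₀ → x ∈ Submodule.span ℂ {c, y} →
      ker c ≤ (F₀.map y).comap x := fun c hc hcR hxc =>
    Submodule.map_le_iff_le_comap.mp <| (map_ker_le_map_ker_of_mem_span_pair hxc).trans <|
      Submodule.map_mono fun v hv => hF₀ ▸ Submodule.subset_span (Set.mem_biUnion ⟨hc, hcR⟩ hv)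
  have hker : ∀ c ∈ J, finrank ℂ (range c) = R₀ → ker c ≤ (F₀.map y).comap x := by
    intro c hc hcR
    by_cases hcy : c ∈ ℂ ∙ y
    · obtain ⟨μ, rfl⟩ := Submodule.mem_span_singleton.mp hcy
      have hJt : ∀ t : ℂ, μ • y + t • x ∈ J := fun t => J.add_mem hc (J.smul_mem t hx)
      rw [← Submodule.ker_mkQ (F₀.map y), ← ker_comp]
      refine ker_le_ker_of_forall_finrank_range_eq (fun t => hcR ▸ hR₀le _ (hJt t))
        fun t ht0 hrank => ?_
      rw [ker_comp, Submodule.ker_mkQ]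
      refine hpair _ (hJt t) (hrank.trans hcR) (Submodule.mem_span_pair.mpr ⟨t⁻¹, -(t⁻¹ * μ), ?_⟩)
      rw [smul_add, smul_smul, smul_smul, inv_mul_cancel₀ ht0]
      module
    · exact hpair c hc hcR (Submodule.mem_span_pair_of_notMem_span_singleton (hJ ▸ hc)
        (hJ ▸ hy) (hJ ▸ hx) hy0 hcy)
  rw [Submodule.map_le_iff_le_comap]
  exact hF₀.le.trans (Submodule.span_le.mpr (Set.iUnion₂_subset fun c hc => hker c hc.1 hc.2))

/-- For a pencil J = span{c₁,c₂} of bivectors on a finite-dimensional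
complex vector space V (regarded as skew maps V* → V), with R₀ the maximal rank and
F₀ the span of the kernels of the maximal-rank members, one has a♯(F₀) = b♯(F₀)
for any two nonzero a, b ∈ J. -/
theorem stmt0 (V : Type*) [AddCommGroup V] [Module ℂ V] [FiniteDimensional ℂ V]
    (c₁ c₂ : Module.Dual ℂ V →ₗ[ℂ] V)
    (hskew₁ : ∀ f g : Module.Dual ℂ V, f (c₁ g) = - g (c₁ f))
    (hskew₂ : ∀ f g : Module.Dual ℂ V, f (c₂ g) = - g (c₂ f))
    (J : Submodule ℂ (Module.Dual ℂ V →ₗ[ℂ] V)) (hJ : J = Submodule.span ℂ {c₁, c₂})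
    (R₀ : ℕ)
    (hR₀le : ∀ c ∈ J, finrank ℂ (LinearMap.range c) ≤ R₀)
    (hR₀ex : ∃ c ∈ J, finrank ℂ (LinearMap.range c) = R₀)
    (F₀ : Submodule ℂ (Module.Dual ℂ V))
    (hF₀ : F₀ = Submodule.span ℂ
      (⋃ c ∈ {c | c ∈ J ∧ finrank ℂ (LinearMap.range c) = R₀},
        (LinearMap.ker c : Set (Module.Dual ℂ V))))
    (a b : Module.Dual ℂ V →ₗ[ℂ] V) (ha : a ∈ J) (hb : b ∈ J)
    (ha0 : a ≠ 0) (hb0 : b ≠ 0) :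
    F₀.map a = F₀.map b :=
  stmt0_general V c₁ c₂ J hJ R₀ hR₀le F₀ hF₀ a b ha hb ha0 hb0
end

section
/- Let V be a finite-dimensional complex vector space, J ⊂ Λ²V a two-dimensional space of bivectors with subset J₀ of maximal-rank elements, F₀ the span of kernels of elements of J₀, and F̃₀ = (c^♯(F₀))^⊥ for any nonzero c ∈ J (this is independent of c). Then F₀ ⊆ F̃₀, and ker c ⊆ F̃₀ for every nonzero c ∈ J. -/
open Module LinearMap


open Module LinearMap Polynomial

/-- For any square matrix A over ℂ there is t ≠ 0 with det (1 + t A) ≠ 0. -/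
lemma aux_exists_det_ne_zero {m : Type*} [Fintype m] [DecidableEq m] (A : Matrix m m ℂ) :
    ∃ t : ℂ, t ≠ 0 ∧ (1 + t • A).det ≠ 0 := by
  set P : Polynomial ℂ := Matrix.det (1 + (X : ℂ[X]) • A.map C) with hP
  have hev : ∀ t : ℂ, Polynomial.eval t P = (1 + t • A).det := by
    intro t
    rw [hP, ← coe_evalRingHom, RingHom.map_det]
    congr 1
    ext i j
    simp [Matrix.map_apply, Matrix.add_apply, Matrix.smul_apply, Matrix.one_apply, apply_ite]
    ring
  have hP0 : P ≠ 0 := by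
    intro h
    have := hev 0
    rw [h] at this
    simp at this
  have hfin : Set.Finite ({t : ℂ | P.IsRoot t} ∪ {0}) :=
    (Polynomial.finite_setOf_isRoot hP0).union (Set.finite_singleton 0)
  obtain ⟨t, ht⟩ := (hfin.infinite_compl).nonempty
  simp only [Set.mem_compl_iff, Set.mem_union, Set.mem_setOf_eq, Set.mem_singleton_iff,
    not_or] at ht
  exact ⟨t, ht.2, by rw [← hev t]; exact ht.1⟩

/-- If f is injective then f + t • g is injective for some t ≠ 0. -/
lemma aux_exists_injective_add_smul {M N : Type*} [AddCommGroup M] [Module ℂ M]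
    [AddCommGroup N] [Module ℂ N] [FiniteDimensional ℂ M] [FiniteDimensional ℂ N]
    (f g : M →ₗ[ℂ] N) (hf : Function.Injective f) :
    ∃ t : ℂ, t ≠ 0 ∧ Function.Injective (f + t • g) := by
  obtain ⟨π, hπ⟩ := f.exists_leftInverse_of_injective (LinearMap.ker_eq_bot.mpr hf)
  set u : M →ₗ[ℂ] M := π ∘ₗ g with hu
  let b := Module.finBasis ℂ M
  set A := LinearMap.toMatrix b b u with hA
  obtain ⟨t, ht0, hdet⟩ := aux_exists_det_ne_zero A
  refine ⟨t, ht0, ?_⟩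
  have h1 : π ∘ₗ (f + t • g) = LinearMap.id + t • u := by
    ext x
    have hx : π (f x) = x := LinearMap.ext_iff.mp hπ x
    simp [hu, hx]
  have hdet' : LinearMap.det (LinearMap.id (R := ℂ) (M := M) + t • u) ≠ 0 := by
    rw [← LinearMap.det_toMatrix b]
    convert hdet using 2
    simp [hA]
  have h2 : Function.Injective (LinearMap.id (R := ℂ) (M := M) + t • u) :=
    (LinearMap.equivOfDetNeZero _ hdet').injective
  intro x y hxy
  apply h2
  have := congrArg π hxy
  rw [← LinearMap.comp_apply, ← LinearMap.comp_apply, h1] at this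
  exact this

/-- If a has maximal rank in the pencil spanned by a and b, then b (ker a) ⊆ range a. -/
lemma aux_keyA {V : Type*} [AddCommGroup V] [Module ℂ V] [FiniteDimensional ℂ V]
    (a b : Module.Dual ℂ V →ₗ[ℂ] V)
    (hrank : ∀ t : ℂ, finrank ℂ (LinearMap.range (a + t • b)) ≤ finrank ℂ (LinearMap.range a))
    {f : Module.Dual ℂ V} (hf : a f = 0) : b f ∈ LinearMap.range a := by
  by_contra hv
  obtain ⟨W, hW⟩ := Submodule.exists_isCompl (LinearMap.ker a)
  let F : (W × ℂ) →ₗ[ℂ] V :=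
    (a ∘ₗ W.subtype).coprod (LinearMap.toSpanSingleton ℂ V (b f))
  let G : (W × ℂ) →ₗ[ℂ] V := (b ∘ₗ W.subtype).coprod 0
  have hFinj : Function.Injective F := by
    rw [← LinearMap.ker_eq_bot]
    rw [Submodule.eq_bot_iff]
    rintro ⟨w, s⟩ hws
    have h0 : a w + s • b f = 0 := by
      simpa [F, LinearMap.toSpanSingleton_apply] using hws
    have hs : s = 0 := by
      by_contra hs
      apply hv
      refine ⟨(-s⁻¹) • (w : Module.Dual ℂ V), ?_⟩
      have h1 : b f = (-s⁻¹) • a (w : Module.Dual ℂ V) := by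
        have h2 : s • b f = -(a (w : Module.Dual ℂ V)) := by
          calc s • b f = (a (w : Module.Dual ℂ V) + s • b f) - a (w : Module.Dual ℂ V) := by
                abel
            _ = -(a (w : Module.Dual ℂ V)) := by rw [h0]; abel
        calc b f = s⁻¹ • (s • b f) := by rw [smul_smul, inv_mul_cancel₀ hs, one_smul]
          _ = s⁻¹ • (-(a (w : Module.Dual ℂ V))) := by rw [h2]
          _ = (-s⁻¹) • a (w : Module.Dual ℂ V) := by rw [smul_neg, neg_smul]
      rw [map_smul]
      exact h1.symm
    rw [hs, zero_smul, add_zero] at h0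
    have hw : (w : Module.Dual ℂ V) ∈ LinearMap.ker a ⊓ W := ⟨h0, w.2⟩
    rw [hW.inf_eq_bot] at hw
    have : (w : Module.Dual ℂ V) = 0 := hw
    simp [Prod.ext_iff, hs, Subtype.ext_iff, this]
  obtain ⟨t, ht0, htinj⟩ := aux_exists_injective_add_smul F G hFinj
  -- range (F + t • G) ≤ range (a + t • b)
  have hle : LinearMap.range (F + t • G) ≤ LinearMap.range (a + t • b) := by
    rintro _ ⟨⟨w, s⟩, rfl⟩
    rw [← Submodule.smul_mem_iff _ ht0]
    refine ⟨t • (w : Module.Dual ℂ V) + s • f, ?_⟩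
    simp only [F, G, map_add, map_smul, LinearMap.add_apply, LinearMap.smul_apply,
      LinearMap.coprod_apply, LinearMap.comp_apply, Submodule.coe_subtype,
      LinearMap.toSpanSingleton_apply, LinearMap.zero_apply, hf]
    module
  have hdimW : finrank ℂ W = finrank ℂ (LinearMap.range a) := by
    have h1 := Submodule.finrank_add_eq_of_isCompl hW
    have h2 := LinearMap.finrank_range_add_finrank_ker a
    omega
  have hr1 : finrank ℂ (LinearMap.range (F + t • G)) = finrank ℂ (LinearMap.range a) + 1 := by
    rw [LinearMap.finrank_range_of_inj htinj]
    simp [hdimW]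
  have := Submodule.finrank_mono hle
  rw [hr1] at this
  have := le_trans this (hrank t)
  omega

/-- With J a 2-dimensional pencil of bivectors, J₀ the maximal-rank
members, F₀ the span of their kernels, and F̃₀ = (c♯(F₀))^⊥ for a nonzero c ∈ J:
F₀ ⊆ F̃₀ and ker c' ⊆ F̃₀ for every nonzero c' ∈ J (in particular F̃₀ is
independent of the choice of the nonzero c ∈ J used to define it). -/
theorem stmt2 (V : Type*) [AddCommGroup V] [Module ℂ V] [FiniteDimensional ℂ V]
    (J : Submodule ℂ (Module.Dual ℂ V →ₗ[ℂ] V)) (hdim : finrank ℂ J = 2)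
    (hskew : ∀ c ∈ J, ∀ f g : Module.Dual ℂ V, f (c g) = - g (c f))
    (R₀ : ℕ)
    (hR₀le : ∀ c ∈ J, finrank ℂ (LinearMap.range c) ≤ R₀)
    (hR₀ex : ∃ c ∈ J, finrank ℂ (LinearMap.range c) = R₀)
    (F₀ : Submodule ℂ (Module.Dual ℂ V))
    (hF₀ : F₀ = Submodule.span ℂ
      (⋃ c ∈ {c | c ∈ J ∧ finrank ℂ (LinearMap.range c) = R₀},
        (LinearMap.ker c : Set (Module.Dual ℂ V)))) :
    ∀ c ∈ J, c ≠ 0 →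
      (F₀ ≤ (F₀.map c).dualAnnihilator ∧
        ∀ c' ∈ J, c' ≠ 0 → LinearMap.ker c' ≤ (F₀.map c).dualAnnihilator) := by
  -- R₀ is positive (hence maximal rank elements are nonzero)
  have hR0pos : 0 < R₀ := by
    by_contra h
    push_neg at h
    interval_cases R₀
    have hbot : J = ⊥ := by
      rw [Submodule.eq_bot_iff]
      intro c hc
      have h1 : finrank ℂ (LinearMap.range c) = 0 := Nat.le_zero.mp (hR₀le c hc)
      have h2 : LinearMap.range c = ⊥ := Submodule.finrank_eq_zero.mp h1
      exact LinearMap.range_eq_bot.mp h2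
    rw [hbot, finrank_bot] at hdim
    omega
  have hmaxne : ∀ a ∈ J, finrank ℂ (LinearMap.range a) = R₀ → a ≠ 0 := by
    intro a _ har ha0
    rw [ha0, LinearMap.range_zero, finrank_bot] at har
    omega
  -- the core computation
  have key : ∀ c ∈ J, ∀ c' ∈ J, c' ≠ 0 → ∀ f, c' f = 0 →
      ∀ a ∈ J, finrank ℂ (LinearMap.range a) = R₀ → ∀ g, a g = 0 → f (c g) = 0 := by
    intro c hc c' hc' hc'0 f hf a ha har g hg
    have ha0 : a ≠ 0 := hmaxne a ha har
    by_cases hdep : a ∈ Submodule.span ℂ ({c'} : Set (Module.Dual ℂ V →ₗ[ℂ] V))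
    · -- a = λ • c' with λ ≠ 0, so f ∈ ker a; use the rank lemma
      obtain ⟨l, hl⟩ := Submodule.mem_span_singleton.mp hdep
      have hl0 : l ≠ 0 := by
        rintro rfl
        rw [zero_smul] at hl
        exact ha0 hl.symm
      have haf : a f = 0 := by rw [← hl, LinearMap.smul_apply, hf, smul_zero]
      have hrank : ∀ t : ℂ, finrank ℂ (LinearMap.range (a + t • c)) ≤
          finrank ℂ (LinearMap.range a) := by
        intro t
        rw [har]
        exact hR₀le _ (J.add_mem ha (J.smul_mem t hc))
      have hcg : c g ∈ LinearMap.range a := aux_keyA a c hrank hg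
      obtain ⟨h, hh⟩ := hcg
      rw [← hh, hskew a ha f h, haf]
      simp
    · -- c' and a are independent, hence span J; write c in terms of them
      have hli : LinearIndependent ℂ ![c', a] := by
        rw [LinearIndependent.pair_iff]
        intro s t hst
        have ht : t = 0 := by
          by_contra ht
          apply hdep
          rw [Submodule.mem_span_singleton]
          refine ⟨-(t⁻¹ * s), ?_⟩
          have : t • a = -(s • c') := by
            calc t • a = (s • c' + t • a) - s • c' := by abel
              _ = -(s • c') := by rw [hst]; abel
          calc -(t⁻¹ * s) • c' = -(t⁻¹ • (s • c')) := by module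
            _ = t⁻¹ • (t • a) := by rw [this, smul_neg]
            _ = a := by rw [smul_smul, inv_mul_cancel₀ ht, one_smul]
        rw [ht, zero_smul, add_zero] at hst
        have hs : s = 0 := by
          by_contra hs
          exact hc'0 (by
            have := congrArg (fun x => s⁻¹ • x) hst
            simpa [smul_smul, inv_mul_cancel₀ hs] using this)
        exact ⟨hs, ht⟩
      have hspan : Submodule.span ℂ ({c', a} : Set (Module.Dual ℂ V →ₗ[ℂ] V)) = J := by
        apply Submodule.eq_of_le_of_finrank_le
        · rw [Submodule.span_le]
          rintro x hx
          rcases hx with rfl | hx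
          · exact hc'
          · rw [Set.mem_singleton_iff] at hx; subst hx; exact ha
        · rw [hdim]
          have : ({c', a} : Set (Module.Dual ℂ V →ₗ[ℂ] V)) = Set.range ![c', a] := by
            simp [Matrix.range_cons, Matrix.range_empty]
            exact Set.pair_comm c' a
          rw [this, finrank_span_eq_card hli]
          simp
      have hcmem : c ∈ Submodule.span ℂ ({c', a} : Set (Module.Dual ℂ V →ₗ[ℂ] V)) := by
        rw [hspan]; exact hc
      obtain ⟨α, β, hαβ⟩ := Submodule.mem_span_pair.mp hcmem
      have hcg : c g = α • (c' g) := by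
        rw [← hαβ]
        simp [LinearMap.add_apply, LinearMap.smul_apply, hg]
      rw [hcg, map_smul, hskew c' hc' f g, hf]
      simp
  -- reduce annihilation of F₀ (on the right) to kernels, by span induction
  have main : ∀ c ∈ J, ∀ c' ∈ J, c' ≠ 0 → ∀ f, c' f = 0 → ∀ g ∈ F₀, f (c g) = 0 := by
    intro c hc c' hc' hc'0 f hf g hg
    rw [hF₀] at hg
    induction hg using Submodule.span_induction with
    | mem x hx =>
      simp only [Set.mem_iUnion, Set.mem_setOf_eq, SetLike.mem_coe] at hx
      obtain ⟨a, ⟨haJ, har⟩, hax⟩ := hx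
      exact key c hc c' hc' hc'0 f hf a haJ har x hax
    | zero => simp
    | add x y _ _ hx hy => rw [map_add, map_add, hx, hy, add_zero]
    | smul r x _ hx => rw [map_smul, map_smul, hx, smul_zero]
  intro c hc hc0
  constructor
  · -- F₀ ≤ (F₀.map c).dualAnnihilator : span induction on the left argument
    intro f hfF
    rw [Submodule.mem_dualAnnihilator]
    intro v hv
    rw [Submodule.mem_map] at hv
    obtain ⟨g, hg, rfl⟩ := hv
    revert hfF
    rw [hF₀]
    intro hfF
    induction hfF using Submodule.span_induction with
    | mem x hx =>
      simp only [Set.mem_iUnion, Set.mem_setOf_eq, SetLike.mem_coe] at hx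
      obtain ⟨a, ⟨haJ, har⟩, hax⟩ := hx
      exact main c hc a haJ (hmaxne a haJ har) x hax g hg
    | zero => simp
    | add x y _ _ hx hy => rw [LinearMap.add_apply, hx, hy, add_zero]
    | smul r x _ hx => rw [LinearMap.smul_apply, hx, smul_zero]
  · intro c' hc' hc'0 f hf
    rw [Submodule.mem_dualAnnihilator]
    intro v hv
    rw [Submodule.mem_map] at hv
    obtain ⟨g, hg, rfl⟩ := hv
    exact main c hc c' hc' hc'0 f (LinearMap.mem_ker.mp hf) g hg
end

section
/- Let V be a finite-dimensional complex vector space and c₁, c₂ ∈ Λ²V a pair of bivectors admitting a decomposition into Kronecker blocks and trivial (one-dimensional zero) blocks with no Jordan blocks. Set μ = dim(ker c₁ ∩ ker c₂) and μ_λ = dim(ker c₁ ∩ ker c_λ) for c_λ = λ₁c₁ + λ₂c₂ with λ₁, λ₂ ≠ 0. Then μ = μ_λ for all such λ, and this common number equals the total dimension of the trivial Kronecker blocks in the decomposition. -/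
open Module LinearMap

/-- The (2n+1)-dimensional space of a Kronecker block (n = 0 gives the
one-dimensional trivial block). -/
abbrev KronV (n : ℕ) := (Fin n → ℂ) × (Fin (n + 1) → ℂ)

noncomputable def wedgeMap {V : Type*} [AddCommGroup V] [Module ℂ V] (p q : V) :
    Module.Dual ℂ V →ₗ[ℂ] V :=
  (Module.Dual.eval ℂ V p).smulRight q - (Module.Dual.eval ℂ V q).smulRight p

noncomputable def kronP (n : ℕ) (i : Fin n) : KronV n := (Pi.single i 1, 0)

noncomputable def kronQ (n : ℕ) (j : Fin (n + 1)) : KronV n := (0, Pi.single j 1)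

noncomputable def kronA1 (n : ℕ) : Module.Dual ℂ (KronV n) →ₗ[ℂ] KronV n :=
  ∑ i : Fin n, wedgeMap (kronP n i) (kronQ n i.castSucc)

noncomputable def kronA2 (n : ℕ) : Module.Dual ℂ (KronV n) →ₗ[ℂ] KronV n :=
  ∑ i : Fin n, wedgeMap (kronP n i) (kronQ n i.succ)

/-- The direct sum over the blocks of the block bivectors A (a bivector on the
product space, as a skew map from the dual of the product). -/
noncomputable def blockSum (ι : Type*) [Fintype ι] [DecidableEq ι] (mdim : ι → ℕ)
    (A : (n : ℕ) → (Module.Dual ℂ (KronV n) →ₗ[ℂ] KronV n)) :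
    Module.Dual ℂ ((i : ι) → KronV (mdim i)) →ₗ[ℂ] ((i : ι) → KronV (mdim i)) :=
  LinearMap.pi fun i =>
    (A (mdim i)) ∘ₗ (LinearMap.single ℂ (fun i => KronV (mdim i)) i).dualMap

/-!
All the maps are block diagonal, so `ker c₁ ⊓ ker c₂` is, up to the isomorphism `e`, the product
of the corresponding kernels of the blocks. On a block of size `2n + 1` with `n > 0`, a covector
killed by `c₁` vanishes on every `pᵢ` and on `q₀, …, qₙ₋₁`, and one killed by `c₂` also vanishes
on `qₙ`, so that block contributes nothing; a trivial block contributes its whole dual line.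
Finally `λ₂ ≠ 0` gives `ker c₁ ⊓ ker (λ₁ c₁ + λ₂ c₂) = ker c₁ ⊓ ker c₂`.
-/

namespace Submodule

variable {R ι : Type*} {φ : ι → Type*} [Semiring R] [∀ i, AddCommMonoid (φ i)]
  [∀ i, Module R (φ i)]

def piUnivEquiv (p : ∀ i, Submodule R (φ i)) : pi Set.univ p ≃ₗ[R] ∀ i, p i where
  toFun x i := ⟨x.1 i, x.2 i trivial⟩
  map_add' _ _ := rfl
  map_smul' _ _ := rfl
  invFun x := ⟨fun i => x i, fun i _ => (x i).2⟩

theorem pi_univ_inf (p q : ∀ i, Submodule R (φ i)) :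
    pi Set.univ p ⊓ pi Set.univ q = pi Set.univ fun i => p i ⊓ q i := by
  ext x
  simp [forall_and]

theorem finrank_pi_univ {K : Type*} [Field K] [Fintype ι] {φ : ι → Type*}
    [∀ i, AddCommGroup (φ i)] [∀ i, Module K (φ i)] [∀ i, FiniteDimensional K (φ i)]
    (p : ∀ i, Submodule K (φ i)) :
    finrank K (pi Set.univ p) = ∑ i, finrank K (p i) := by
  rw [(piUnivEquiv p).finrank_eq, finrank_pi_fintype]

end Submodule

theorem LinearMap.ker_piMap {R ι : Type*} {φ ψ : ι → Type*} [Semiring R]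
    [∀ i, AddCommMonoid (φ i)] [∀ i, Module R (φ i)] [∀ i, AddCommMonoid (ψ i)]
    [∀ i, Module R (ψ i)] (f : ∀ i, φ i →ₗ[R] ψ i) :
    ker (piMap f) = Submodule.pi Set.univ fun i => ker (f i) := by
  ext x
  simp [funext_iff]

theorem LinearMap.ker_inf_ker_smul_add_smul {R M N : Type*} [CommSemiring R] [AddCommMonoid M]
    [AddCommMonoid N] [Module R M] [Module R N] [IsCancelMulZero R] [Module.IsTorsionFree R N]
    (f g : M →ₗ[R] N) (a : R) {b : R} (hb : b ≠ 0) :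
    ker f ⊓ ker (a • f + b • g) = ker f ⊓ ker g := by
  ext x
  simp +contextual [smul_eq_zero_iff_right hb]

theorem blockSum_eq_piMap_comp (ι : Type*) [Fintype ι] [DecidableEq ι] (mdim : ι → ℕ)
    (A : (n : ℕ) → (Module.Dual ℂ (KronV n) →ₗ[ℂ] KronV n)) :
    blockSum ι mdim A = piMap (fun i => A (mdim i)) ∘ₗ
      (lsum ℂ (fun i => KronV (mdim i)) ℂ).symm.toLinearMap := by
  rfl

theorem finrank_ker_blockSum_inf_ker_blockSum (ι : Type*) [Fintype ι] [DecidableEq ι]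
    (mdim : ι → ℕ) (A B : (n : ℕ) → (Module.Dual ℂ (KronV n) →ₗ[ℂ] KronV n)) :
    finrank ℂ (ker (blockSum ι mdim A) ⊓ ker (blockSum ι mdim B) :
        Submodule ℂ (Module.Dual ℂ ((i : ι) → KronV (mdim i))))
      = ∑ i, finrank ℂ (ker (A (mdim i)) ⊓ ker (B (mdim i)) :
        Submodule ℂ (Module.Dual ℂ (KronV (mdim i)))) := by
  rw [blockSum_eq_piMap_comp, blockSum_eq_piMap_comp, ker_comp, ker_comp,
    ← Submodule.comap_inf, Submodule.comap_equiv_eq_map_symm, LinearEquiv.finrank_map_eq,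
    ker_piMap, ker_piMap, Submodule.pi_univ_inf, Submodule.finrank_pi_univ]

theorem wedgeMap_apply {V : Type*} [AddCommGroup V] [Module ℂ V] (p q : V)
    (ξ : Module.Dual ℂ V) : wedgeMap p q ξ = ξ p • q - ξ q • p := rfl

section Kronecker

variable {n : ℕ} (ξ : Module.Dual ℂ (KronV n))

theorem kronA1_apply_fst (i : Fin n) : (kronA1 n ξ).1 i = -ξ (kronQ n i.castSucc) := by
  simp [kronA1, wedgeMap_apply, kronP, kronQ, Prod.fst_sum, Finset.sum_apply, Pi.single_apply]

theorem kronA1_apply_snd_castSucc (i : Fin n) :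
    (kronA1 n ξ).2 i.castSucc = ξ (kronP n i) := by
  simp [kronA1, wedgeMap_apply, kronP, kronQ, Prod.snd_sum, Finset.sum_apply, Pi.single_apply]

theorem kronA2_apply_fst (i : Fin n) : (kronA2 n ξ).1 i = -ξ (kronQ n i.succ) := by
  simp [kronA2, wedgeMap_apply, kronP, kronQ, Prod.fst_sum, Finset.sum_apply, Pi.single_apply]

theorem ker_kronA1_inf_ker_kronA2_succ (m : ℕ) :
    (ker (kronA1 (m + 1)) ⊓ ker (kronA2 (m + 1)) :
      Submodule ℂ (Module.Dual ℂ (KronV (m + 1)))) = ⊥ := by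
  refine eq_bot_iff.2 fun ξ ⟨h1, h2⟩ => ?_
  rw [SetLike.mem_coe, mem_ker] at h1 h2
  have hP (i : Fin (m + 1)) : ξ (kronP (m + 1) i) = 0 := by
    rw [← kronA1_apply_snd_castSucc, h1]; rfl
  have hQ (j : Fin (m + 2)) : ξ (kronQ (m + 1) j) = 0 := by
    rcases Fin.eq_castSucc_or_eq_last j with ⟨i, rfl⟩ | rfl
    · simpa [h1] using kronA1_apply_fst ξ i
    · simpa [h2, Fin.succ_last] using kronA2_apply_fst ξ (Fin.last m)
  ext i
  · exact hP i
  · exact hQ i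

theorem finrank_ker_kronA1_inf_ker_kronA2 (n : ℕ) :
    finrank ℂ (ker (kronA1 n) ⊓ ker (kronA2 n) :
      Submodule ℂ (Module.Dual ℂ (KronV n))) = if n = 0 then 1 else 0 := by
  cases n with
  | zero =>
    rw [show kronA1 0 = 0 from Fin.sum_univ_zero _, show kronA2 0 = 0 from Fin.sum_univ_zero _,
      ker_zero, inf_top_eq, finrank_top, Subspace.dual_finrank_eq]
    simp
  | succ m => simp [ker_kronA1_inf_ker_kronA2_succ]

end Kronecker

theorem stmt5_general (ι : Type*) [Fintype ι] [DecidableEq ι] (mdim : ι → ℕ)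
    (V : Type*) [AddCommGroup V] [Module ℂ V]
    (e : V ≃ₗ[ℂ] ((i : ι) → KronV (mdim i)))
    (c₁ c₂ : Module.Dual ℂ V →ₗ[ℂ] V)
    (hc₁ : c₁ = e.symm.toLinearMap ∘ₗ (blockSum ι mdim kronA1) ∘ₗ
      e.symm.toLinearMap.dualMap)
    (hc₂ : c₂ = e.symm.toLinearMap ∘ₗ (blockSum ι mdim kronA2) ∘ₗ
      e.symm.toLinearMap.dualMap)
    (l1 l2 : ℂ) (h2 : l2 ≠ 0) :
    finrank ℂ ((LinearMap.ker c₁ ⊓ LinearMap.ker c₂ :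
        Submodule ℂ (Module.Dual ℂ V)))
        = (Finset.univ.filter fun i => mdim i = 0).card ∧
    finrank ℂ ((LinearMap.ker c₁ ⊓ LinearMap.ker (l1 • c₁ + l2 • c₂) :
        Submodule ℂ (Module.Dual ℂ V)))
        = (Finset.univ.filter fun i => mdim i = 0).card := by
  have hμ : finrank ℂ (ker c₁ ⊓ ker c₂ : Submodule ℂ (Module.Dual ℂ V))
      = (Finset.univ.filter fun i => mdim i = 0).card := by
    rw [hc₁, hc₂, LinearEquiv.ker_comp, LinearEquiv.ker_comp, ker_comp, ker_comp,
      ← Submodule.comap_inf]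
    change finrank ℂ (Submodule.comap e.symm.dualMap.toLinearMap _) = _
    rw [Submodule.comap_equiv_eq_map_symm, LinearEquiv.finrank_map_eq,
      finrank_ker_blockSum_inf_ker_blockSum, Finset.card_filter]
    exact Finset.sum_congr rfl fun i _ => finrank_ker_kronA1_inf_ker_kronA2 (mdim i)
  exact ⟨hμ, by rw [ker_inf_ker_smul_add_smul c₁ c₂ l1 h2, hμ]⟩

/-- if the pair (c₁, c₂) of bivectors on V decomposes into Kronecker
blocks (block i of dimension 2·(mdim i)+1; the blocks with mdim i = 0 are the
trivial one-dimensional zero blocks) with no Jordan blocks, then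
μ = dim(ker c₁ ∩ ker c₂) equals μ_λ = dim(ker c₁ ∩ ker c_λ) for
c_λ = λ₁c₁ + λ₂c₂, λ₁, λ₂ ≠ 0, and this number is the total dimension of the
trivial Kronecker blocks. -/
theorem stmt5 (ι : Type*) [Fintype ι] [DecidableEq ι] (mdim : ι → ℕ)
    (V : Type*) [AddCommGroup V] [Module ℂ V]
    (e : V ≃ₗ[ℂ] ((i : ι) → KronV (mdim i)))
    (c₁ c₂ : Module.Dual ℂ V →ₗ[ℂ] V)
    (hc₁ : c₁ = e.symm.toLinearMap ∘ₗ (blockSum ι mdim kronA1) ∘ₗ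
      e.symm.toLinearMap.dualMap)
    (hc₂ : c₂ = e.symm.toLinearMap ∘ₗ (blockSum ι mdim kronA2) ∘ₗ
      e.symm.toLinearMap.dualMap)
    (l1 l2 : ℂ) (h1 : l1 ≠ 0) (h2 : l2 ≠ 0) :
    finrank ℂ ((LinearMap.ker c₁ ⊓ LinearMap.ker c₂ :
        Submodule ℂ (Module.Dual ℂ V)))
        = (Finset.univ.filter fun i => mdim i = 0).card ∧
    finrank ℂ ((LinearMap.ker c₁ ⊓ LinearMap.ker (l1 • c₁ + l2 • c₂) :
        Submodule ℂ (Module.Dual ℂ V)))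
        = (Finset.univ.filter fun i => mdim i = 0).card :=
  stmt5_general ι mdim V e c₁ c₂ hc₁ hc₂ l1 l2 h2
end

section
/- Let M be a smooth manifold, p : M → M' a surjective submersion with connected fibers, and Z a smooth k-vector field on M. Then the following are equivalent: (i) L_X Z ∈ Γ(ker Λ^k p_*) for every vector field X tangent to the fibers of p; (ii) (φ_t^X)_* Z − Z ∈ Γ(ker Λ^k p_*) for all t and all fiber-tangent X; (iii) in any local coordinate system (x¹,…,x^l, y¹,…,y^{m'}) in which the y's are constant on fibers, Z decomposes as Z(x,y) = Z'(y) + Z̃(x,y) with Z'(y) involving only ∂_{y} directions with coefficients depending only on y and Z̃ ∈ Γ(ker Λ^k p_*). In this case Z'(x') := Λ^k p_*(Z(x)) for any x ∈ p^{-1}(x') is a well-defined k-vector field on M'. -/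
open Module

/-- Model of a surjective submersion with connected fibers: the projection
p = snd : ℝ^l × ℝ^{m'} → ℝ^{m'} in coordinates (x, y) adapted to the fibration
(the y's are constant on the fibers). -/
abbrev TotSp (l m : ℕ) := (Fin l → ℝ) × (Fin m → ℝ)

/-- Pullback of a covector on the base by p = snd. -/
noncomputable def pbCov (l m : ℕ) (g : Module.Dual ℝ (Fin m → ℝ)) :
    Module.Dual ℝ (TotSp l m) :=
  g ∘ₗ LinearMap.snd ℝ (Fin l → ℝ) (Fin m → ℝ)

/-- The Lie derivative L_X Z of a k-vector field Z (represented as an alternating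
k-form on the cotangent space) along a vector field X, evaluated at x on a tuple
of (constant) covectors f: (L_X Z)(f) = X(Z(f)) − Σᵢ Z(f₁, …, fᵢ∘DX, …, f_k). -/
noncomputable def lieDerVal (l m k : ℕ) (X : TotSp l m → TotSp l m)
    (Z : TotSp l m → (Module.Dual ℝ (TotSp l m) [⋀^Fin k]→ₗ[ℝ] ℝ))
    (x : TotSp l m) (f : Fin k → Module.Dual ℝ (TotSp l m)) : ℝ :=
  fderiv ℝ (fun y => Z y f) x (X x)
    - ∑ i : Fin k, Z x (Function.update f i ((f i) ∘ₗ (fderiv ℝ X x : TotSp l m →L[ℝ] TotSp l m).toLinearMap))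

/-- The "pullback components" function of Z: x ↦ Z x applied to a tuple of
pulled-back covectors. -/
noncomputable def Fv (l m k : ℕ)
    (Z : TotSp l m → (Module.Dual ℝ (TotSp l m) [⋀^Fin k]→ₗ[ℝ] ℝ))
    (g : Fin k → Module.Dual ℝ (Fin m → ℝ)) (x : TotSp l m) : ℝ :=
  Z x (fun i => pbCov l m (g i))

/-- Simplification of the Lie derivative on pulled-back covectors for a
fiber-tangent vector field. -/
lemma lie_simp (l m k : ℕ)
    (Z : TotSp l m → (Module.Dual ℝ (TotSp l m) [⋀^Fin k]→ₗ[ℝ] ℝ))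
    (X : TotSp l m → TotSp l m) (hX : ContDiff ℝ (⊤ : ℕ∞) X) (hXv : ∀ x, (X x).2 = 0)
    (x : TotSp l m) (g : Fin k → Module.Dual ℝ (Fin m → ℝ)) :
    lieDerVal l m k X Z x (fun i => pbCov l m (g i))
      = fderiv ℝ (Fv l m k Z g) x (X x) := by
  have hDX : ∀ w, (fderiv ℝ X x w).2 = 0 := by
    have h1 : HasFDerivAt (fun y => (X y).2)
        ((ContinuousLinearMap.snd ℝ (Fin l → ℝ) (Fin m → ℝ)).comp (fderiv ℝ X x)) x :=
      (ContinuousLinearMap.snd ℝ (Fin l → ℝ) (Fin m → ℝ)).hasFDerivAt.comp x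
        ((hX.differentiable (by simp)) x).hasFDerivAt
    have h2 : HasFDerivAt (fun y => (X y).2) (0 : TotSp l m →L[ℝ] (Fin m → ℝ)) x := by
      have : (fun y => (X y).2) = fun _ : TotSp l m => (0 : Fin m → ℝ) := funext hXv
      rw [this]; exact hasFDerivAt_const _ _
    have h3 := h1.unique h2
    intro w
    have := congrArg (fun (T : TotSp l m →L[ℝ] (Fin m → ℝ)) => T w) h3
    simpa using this
  have hzero : ∀ i : Fin k,
      (pbCov l m (g i)) ∘ₗ (fderiv ℝ X x : TotSp l m →L[ℝ] TotSp l m).toLinearMap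
        = (0 : Module.Dual ℝ (TotSp l m)) := by
    intro i
    apply LinearMap.ext
    intro w
    simp [pbCov, hDX w]
  unfold lieDerVal Fv
  have : ∀ i : Fin k,
      Z x (Function.update (fun j => pbCov l m (g j)) i
        ((pbCov l m (g i)) ∘ₗ (fderiv ℝ X x : TotSp l m →L[ℝ] TotSp l m).toLinearMap)) = 0 := by
    intro i
    rw [hzero i]
    exact (Z x).map_update_zero _ _
  rw [Finset.sum_congr rfl (fun i _ => this i), Finset.sum_const, smul_zero, sub_zero]

/-- The pushed-forward k-vector field on the base, built from values of Z on a slice. -/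
noncomputable def pushZ (l m k : ℕ)
    (Z : TotSp l m → (Module.Dual ℝ (TotSp l m) [⋀^Fin k]→ₗ[ℝ] ℝ))
    (y : Fin m → ℝ) : Module.Dual ℝ (Fin m → ℝ) [⋀^Fin k]→ₗ[ℝ] ℝ :=
  (Z ((0 : Fin l → ℝ), y)).compLinearMap
    (LinearMap.dualMap (LinearMap.snd ℝ (Fin l → ℝ) (Fin m → ℝ)))

/-- for a smooth k-vector field Z on the total space of the
submersion p = snd (fibers = the leaves of the foliation 𝒦), the following are
equivalent: (i) L_X Z ∈ Γ(ker Λ^k p_*) for all fiber-tangent X (membership in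
ker Λ^k p_* = vanishing on all tuples of covectors pulled back from the base);
(ii) (φ_t^X)_* Z − Z ∈ Γ(ker Λ^k p_*) for every flow φ of every fiber-tangent X;
(iii) Z decomposes as Z'(y) + Z̃ with Z̃ ∈ Γ(ker Λ^k p_*), i.e. the pullback
components of Z depend only on y and define the push-forward Z' =: Λ^k p_* Z. -/
theorem stmt6 (l m k : ℕ)
    (Z : TotSp l m → (Module.Dual ℝ (TotSp l m) [⋀^Fin k]→ₗ[ℝ] ℝ))
    (hZ : ∀ f : Fin k → Module.Dual ℝ (TotSp l m), ContDiff ℝ (⊤ : ℕ∞) fun y => Z y f) :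
    ((∀ X : TotSp l m → TotSp l m, ContDiff ℝ (⊤ : ℕ∞) X → (∀ x, (X x).2 = 0) →
        ∀ x, ∀ g : Fin k → Module.Dual ℝ (Fin m → ℝ),
          lieDerVal l m k X Z x (fun i => pbCov l m (g i)) = 0)
      ↔ (∀ X : TotSp l m → TotSp l m, ContDiff ℝ (⊤ : ℕ∞) X → (∀ x, (X x).2 = 0) →
          ∀ φ : ℝ → TotSp l m → TotSp l m,
            (∀ x, φ 0 x = x) →
            (∀ s t x, φ (s + t) x = φ s (φ t x)) →
            (∀ t, ContDiff ℝ (⊤ : ℕ∞) (φ t)) →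
            (∀ t x, HasDerivAt (fun s => φ s x) (X (φ t x)) t) →
            ∀ t x, ∀ g : Fin k → Module.Dual ℝ (Fin m → ℝ),
              Z (φ (-t) x) (fun i => (pbCov l m (g i)) ∘ₗ
                  (fderiv ℝ (φ t) (φ (-t) x) : TotSp l m →L[ℝ] TotSp l m).toLinearMap)
                = Z x fun i => pbCov l m (g i)))
    ∧ ((∀ X : TotSp l m → TotSp l m, ContDiff ℝ (⊤ : ℕ∞) X → (∀ x, (X x).2 = 0) →
        ∀ x, ∀ g : Fin k → Module.Dual ℝ (Fin m → ℝ),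
          lieDerVal l m k X Z x (fun i => pbCov l m (g i)) = 0)
      ↔ (∃ Z' : (Fin m → ℝ) → (Module.Dual ℝ (Fin m → ℝ) [⋀^Fin k]→ₗ[ℝ] ℝ),
          ∀ x, ∀ g : Fin k → Module.Dual ℝ (Fin m → ℝ),
            Z x (fun i => pbCov l m (g i)) = Z' x.2 g)) := by
  -- basic facts about F := Fv l m k Z g
  have hFsm : ∀ g, ContDiff ℝ (⊤ : ℕ∞) (Fv l m k Z g) := fun g => hZ _
  -- (fiber-constancy) ↔ existence of Z'
  -- Condition C: Z factors through the second component.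
  set A : Prop := (∀ X : TotSp l m → TotSp l m, ContDiff ℝ (⊤ : ℕ∞) X → (∀ x, (X x).2 = 0) →
        ∀ x, ∀ g : Fin k → Module.Dual ℝ (Fin m → ℝ),
          lieDerVal l m k X Z x (fun i => pbCov l m (g i)) = 0) with hA
  -- Step: A implies vertical derivatives of F vanish
  have hA_to_vert : A → ∀ g x (v : Fin l → ℝ),
      fderiv ℝ (Fv l m k Z g) x ((v, 0) : TotSp l m) = 0 := by
    intro hA' g x v
    have := hA' (fun _ => ((v, 0) : TotSp l m)) contDiff_const (fun _ => rfl) x g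
    rwa [lie_simp l m k Z _ contDiff_const (fun _ => rfl) x g] at this
  -- Step: vertical derivatives vanish → fiber-constancy
  have hvert_to_C : (∀ g x (v : Fin l → ℝ),
      fderiv ℝ (Fv l m k Z g) x ((v, 0) : TotSp l m) = 0) →
      ∀ g (x : TotSp l m), Fv l m k Z g x = Fv l m k Z g (0, x.2) := by
    intro hv g x
    set h : (Fin l → ℝ) → ℝ := fun v => Fv l m k Z g (v, x.2) with hh
    have hdiff : ∀ v : Fin l → ℝ, HasFDerivAt h
        ((fderiv ℝ (Fv l m k Z g) (v, x.2)).comp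
          ((ContinuousLinearMap.id ℝ (Fin l → ℝ)).prod 0)) v := by
      intro v
      exact (((hFsm g).differentiable (by simp)) (v, x.2)).hasFDerivAt.comp v
        (show HasFDerivAt (fun w : Fin l → ℝ => (w, x.2)) ((ContinuousLinearMap.id ℝ (Fin l → ℝ)).prod 0) v from
          (hasFDerivAt_id v).prodMk (hasFDerivAt_const x.2 v))
    have hzero : ∀ v : Fin l → ℝ, fderiv ℝ h v = 0 := by
      intro v
      rw [(hdiff v).fderiv]
      ext w
      simpa using hv g (v, x.2) w
    have := is_const_of_fderiv_eq_zero (fun v => (hdiff v).differentiableAt) hzero x.1 0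
    simpa [hh] using this
  -- Step: fiber-constancy → existence of Z'
  have hC_to_ex : (∀ g (x : TotSp l m), Fv l m k Z g x = Fv l m k Z g (0, x.2)) →
      ∀ x g, Z x (fun i => pbCov l m (g i)) = pushZ l m k Z x.2 g := by
    intro hC x g
    have := hC g x
    simpa [Fv, pushZ, AlternatingMap.compLinearMap_apply, pbCov, LinearMap.dualMap_apply'] using this
  -- Step: existence of Z' → vertical derivatives vanish
  have hex_to_vert : (∃ Z' : (Fin m → ℝ) → (Module.Dual ℝ (Fin m → ℝ) [⋀^Fin k]→ₗ[ℝ] ℝ),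
          ∀ x, ∀ g : Fin k → Module.Dual ℝ (Fin m → ℝ),
            Z x (fun i => pbCov l m (g i)) = Z' x.2 g) →
      ∀ g x (v : Fin l → ℝ), fderiv ℝ (Fv l m k Z g) x ((v, 0) : TotSp l m) = 0 := by
    rintro ⟨Z', hZ'⟩ g x v
    set h : (Fin m → ℝ) → ℝ := fun y => Fv l m k Z g (0, y) with hh
    have hhd : ∀ y : Fin m → ℝ, HasFDerivAt h
        ((fderiv ℝ (Fv l m k Z g) ((0 : Fin l → ℝ), y)).comp
          ((0 : (Fin m → ℝ) →L[ℝ] (Fin l → ℝ)).prod (ContinuousLinearMap.id ℝ _))) y := by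
      intro y
      exact (((hFsm g).differentiable (by simp)) (0, y)).hasFDerivAt.comp y
        ((hasFDerivAt_const _ _).prodMk (hasFDerivAt_id y))
    have hFh : Fv l m k Z g = fun x : TotSp l m => h x.2 := by
      funext z
      simp only [hh, Fv]
      rw [hZ' z g, hZ' ((0 : Fin l → ℝ), z.2) g]
    have hsnd : HasFDerivAt (fun p : TotSp l m => p.2)
        (ContinuousLinearMap.snd ℝ (Fin l → ℝ) (Fin m → ℝ)) x :=
      (ContinuousLinearMap.snd ℝ (Fin l → ℝ) (Fin m → ℝ)).hasFDerivAt
    have hD := (hhd x.2).comp x hsnd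
    simp only [Function.comp_def] at hD
    rw [← hFh] at hD
    rw [hD.fderiv]
    simp
    exact (fderiv ℝ (Fv l m k Z g) (0, x.2)).map_zero
  -- second equivalence
  have hsecond : A ↔ (∃ Z' : (Fin m → ℝ) → (Module.Dual ℝ (Fin m → ℝ) [⋀^Fin k]→ₗ[ℝ] ℝ),
          ∀ x, ∀ g : Fin k → Module.Dual ℝ (Fin m → ℝ),
            Z x (fun i => pbCov l m (g i)) = Z' x.2 g) := by
    constructor
    · intro hA'
      exact ⟨pushZ l m k Z, hC_to_ex (hvert_to_C (hA_to_vert hA'))⟩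
    · intro hex
      intro X hX hXv x g
      rw [lie_simp l m k Z X hX hXv x g]
      have hXeq : X x = ((X x).1, (0 : Fin m → ℝ)) := by
        ext <;> simp [hXv x]
      rw [hXeq]
      exact hex_to_vert hex g x (X x).1
  refine ⟨?_, hsecond⟩
  constructor
  · -- A → (ii)
    intro hA' X hX hXv φ hφ0 hφadd hφsm hφder t x g
    obtain ⟨Z', hZ'⟩ := hsecond.mp hA'
    -- the flow preserves the second component
    have hpres : ∀ s (z : TotSp l m), (φ s z).2 = z.2 := by
      intro s z
      have hψ : ∀ u : ℝ, HasDerivAt (fun s => (φ s z).2) (0 : Fin m → ℝ) u := by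
        intro u
        have := ((ContinuousLinearMap.snd ℝ (Fin l → ℝ) (Fin m → ℝ)).hasFDerivAt).comp_hasDerivAt
          u (hφder u z)
        have h0 : (ContinuousLinearMap.snd ℝ (Fin l → ℝ) (Fin m → ℝ)) (X (φ u z)) = 0 := hXv _
        rw [h0] at this
        exact this
      have hconst : (fun s => (φ s z).2) s = (fun s => (φ s z).2) 0 :=
        is_const_of_deriv_eq_zero (fun u => (hψ u).differentiableAt)
          (fun u => (hψ u).deriv) s 0
      simpa [hφ0 z] using hconst
    -- snd ∘ fderiv (φ t) = snd
    have hsndD : ∀ (z w : TotSp l m), (fderiv ℝ (φ t) z w).2 = w.2 := by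
      intro z w
      have h1 : HasFDerivAt (fun x => (φ t x).2)
          ((ContinuousLinearMap.snd ℝ (Fin l → ℝ) (Fin m → ℝ)).comp (fderiv ℝ (φ t) z)) z :=
        (ContinuousLinearMap.snd ℝ (Fin l → ℝ) (Fin m → ℝ)).hasFDerivAt.comp z
          (((hφsm t).differentiable (by simp)) z).hasFDerivAt
      have h2 : HasFDerivAt (fun x : TotSp l m => (φ t x).2)
          (ContinuousLinearMap.snd ℝ (Fin l → ℝ) (Fin m → ℝ)) z := by
        have : (fun x : TotSp l m => (φ t x).2) = fun x : TotSp l m => x.2 :=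
          funext fun x => hpres t x
        rw [this]; exact (ContinuousLinearMap.snd ℝ (Fin l → ℝ) (Fin m → ℝ)).hasFDerivAt
      have h3 := h1.unique h2
      have := congrArg (fun (T : TotSp l m →L[ℝ] (Fin m → ℝ)) => T w) h3
      simpa using this
    have hcov : ∀ i, (pbCov l m (g i)) ∘ₗ
        (fderiv ℝ (φ t) (φ (-t) x) : TotSp l m →L[ℝ] TotSp l m).toLinearMap
          = pbCov l m (g i) := by
      intro i
      apply LinearMap.ext
      intro w
      simp [pbCov, hsndD (φ (-t) x) w]
    calc Z (φ (-t) x) (fun i => (pbCov l m (g i)) ∘ₗ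
            (fderiv ℝ (φ t) (φ (-t) x) : TotSp l m →L[ℝ] TotSp l m).toLinearMap)
        = Z (φ (-t) x) (fun i => pbCov l m (g i)) := by
          congr 1; funext i; exact hcov i
      _ = Z' (φ (-t) x).2 g := hZ' _ g
      _ = Z' x.2 g := by rw [hpres (-t) x]
      _ = Z x (fun i => pbCov l m (g i)) := (hZ' x g).symm
  · -- (ii) → A
    intro hii
    apply hsecond.mpr
    refine ⟨pushZ l m k Z, hC_to_ex ?_⟩
    intro g x
    -- use the translation flow along v = x.1
    set c : TotSp l m := ((x.1, 0) : TotSp l m) with hc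
    have key := hii (fun _ => c) contDiff_const (fun _ => rfl)
      (fun t z => z + t • c)
      (fun z => by simp)
      (fun s t z => by simp [add_smul]; abel)
      (fun t => contDiff_id.add contDiff_const)
      (fun t z => by
        simpa using ((hasDerivAt_id t).smul_const c).const_add z)
      1 x g
    have hDid : ∀ z : TotSp l m, fderiv ℝ (fun w : TotSp l m => w + (1 : ℝ) • c) z
        = ContinuousLinearMap.id ℝ (TotSp l m) := by
      intro z
      exact ((hasFDerivAt_id z).add_const ((1 : ℝ) • c)).fderiv
    rw [hDid] at key
    simp only [ContinuousLinearMap.coe_id, LinearMap.comp_id] at key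
    have harg : x + (-1 : ℝ) • c = ((0 : Fin l → ℝ), x.2) := by
      rw [hc]
      ext <;> simp
    rw [harg] at key
    -- key : Z (0, x.2) (pbCov∘g) = Z x (pbCov∘g)
    unfold Fv
    exact key.symm
end

section
/- Let (M, ω) be a complex manifold with a holomorphic symplectic form ω, c = ω^{-1} the holomorphic Poisson bivector, c₁ = Re c, c₂ = Im c, ω₁ = Re ω, ω₂ = Im ω. Then for every λ ∈ ℝ, (c₁ + λ c₂)^♯ ∘ (ω₁ − λ ω₂)^♭ = ((1+λ²)/4) · id_{TM}; in particular c₁ + λ c₂ is a nondegenerate real bivector field for all λ ∈ ℝ, with inverse 2-form (4/(1+λ²))(ω₁ − λ ω₂). -/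
/-!
Put `μ = 1 + λ i`. Then `ω₁ - λ ω₂ = Re (μ ω)` and `c₁ + λ c₂ = Re (μ̄ c)`. A complex-linear form
is recovered from its real part, so `(c₁ + λ c₂)♯ (ω₁ - λ ω₂)♭ v = ¼ μ̄ c (μ ω♭ v) = ¼ |μ|² v`, and
dually `Re (μ ω (w, ¼ μ̄ c f^{1,0})) = ¼ |μ|² Re f^{1,0} (w) = ¼ |μ|² f w`. Since
`|μ|² = 1 + λ² ≠ 0`, both compositions are invertible multiples of the identity.
-/

open Module Complex ComplexConjugate

theorem Function.bijective_of_comp_eq_smul {K M N : Type*} [Field K] [AddCommGroup M] [Module K M]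
    [AddCommGroup N] [Module K N] {f : N → M} {g : M → N} {k : K} (hk : k ≠ 0)
    (hfg : ∀ x, f (g x) = k • x) (hgf : ∀ y, g (f y) = k • y) : Function.Bijective g := by
  refine ⟨fun x x' h ↦ smul_right_injective M hk ?_, fun y ↦ ⟨f (k⁻¹ • y), ?_⟩⟩
  · change k • x = k • x'
    rw [← hfg, ← hfg, h]
  · rw [hgf, smul_inv_smul₀ hk]

theorem Function.RightInverse.leftInverse_of_dual {K V : Type*} [Field K] [AddCommGroup V]
    [Module K V] [FiniteDimensional K V] {φ : V →ₗ[K] Dual K V} {c : Dual K V →ₗ[K] V}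
    (hc : Function.RightInverse c φ) : Function.LeftInverse c φ :=
  hc.leftInverse_of_injective <|
    (LinearMap.injective_iff_surjective_of_finrank_eq_finrank Subspace.dual_finrank_eq.symm).mpr
      hc.surjective

theorem Module.Dual.extendRCLike_reLm_comp {W : Type*} [AddCommGroup W] [Module ℂ W]
    (g : Dual ℂ W) : extendRCLike (reLm ∘ₗ g.restrictScalars ℝ) = g :=
  extendRCLikeₗ.apply_symm_apply g

section Musical

variable {W : Type*} [AddCommGroup W] [Module ℂ W]

noncomputable def realFlat (μ : ℂ) (ω : W →ₗ[ℂ] W →ₗ[ℂ] ℂ) (v : W) : Dual ℝ W :=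
  reLm ∘ₗ ((μ • ω.flip v).restrictScalars ℝ)

/-- The sharp map of `Re (μ c)`: a real covector acts through the `(1,0)`-form whose real part
it is, and the factor `¼` is the normalization of `Re c` in the identification. -/
noncomputable def realSharp (μ : ℂ) (c : Dual ℂ W →ₗ[ℂ] W) (f : Dual ℝ W) : W :=
  (μ / 4) • c f.extendRCLike

theorem realSharp_conj_realFlat {ω : W →ₗ[ℂ] W →ₗ[ℂ] ℂ} {c : Dual ℂ W →ₗ[ℂ] W}
    (hc : Function.LeftInverse c ω.flip) (μ : ℂ) (v : W) :
    realSharp (conj μ) c (realFlat μ ω v) = (normSq μ / 4) • v := by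
  rw [realSharp, realFlat, Dual.extendRCLike_reLm_comp, map_smul, hc, smul_smul,
    ← Complex.coe_smul]
  congr 1
  push_cast
  rw [normSq_eq_conj_mul_self]
  ring

theorem realFlat_realSharp_conj {ω : W →ₗ[ℂ] W →ₗ[ℂ] ℂ} {c : Dual ℂ W →ₗ[ℂ] W}
    (hc : ∀ f w, ω w (c f) = f w) (μ : ℂ) (f : Dual ℝ W) :
    realFlat μ ω (realSharp (conj μ) c f) = (normSq μ / 4) • f := by
  ext w
  have hμ : μ * (conj μ / 4) = ((normSq μ / 4 : ℝ) : ℂ) := by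
    push_cast
    rw [normSq_eq_conj_mul_self]
    ring
  simp only [realFlat, realSharp, LinearMap.comp_apply, LinearMap.restrictScalars_apply,
    LinearMap.smul_apply, LinearMap.flip_apply, map_smul, hc, smul_eq_mul, ← mul_assoc, hμ,
    reLm_coe, re_ofReal_mul]
  exact congrArg _ (Dual.re_extendRCLike_apply (𝕜 := ℂ) f w)

end Musical

theorem stmt9_general (W : Type*) [AddCommGroup W] [Module ℂ W] [FiniteDimensional ℂ W]
    (ω : W →ₗ[ℂ] W →ₗ[ℂ] ℂ)
    (c : Module.Dual ℂ W →ₗ[ℂ] W)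
    (hc : ∀ (f : Module.Dual ℂ W) (w : W), ω w (c f) = f w)
    (c₁ c₂ : Module.Dual ℝ W → W)
    (hc₁ : ∀ f : Module.Dual ℝ W, c₁ f = (4⁻¹ : ℝ) • c (LinearMap.extendTo𝕜' f))
    (hc₂ : ∀ f : Module.Dual ℝ W,
      c₂ f = -((4⁻¹ : ℝ) • (Complex.I • c (LinearMap.extendTo𝕜' f))))
    (lam : ℝ)
    (flat : W → Module.Dual ℝ W)
    (hflat : ∀ v : W, flat v
      = (Complex.reLm - lam • Complex.imLm) ∘ₗ ((ω.flip v).restrictScalars ℝ)) :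
    (∀ v : W, c₁ (flat v) + lam • c₂ (flat v) = (((1 + lam ^ 2) / 4 : ℝ)) • v) ∧
    Function.Bijective (fun f : Module.Dual ℝ W => c₁ f + lam • c₂ f) ∧
    (∀ f : Module.Dual ℝ W,
      flat (c₁ f + lam • c₂ f) = ((1 + lam ^ 2) / 4 : ℝ) • f) := by
  set μ : ℂ := 1 + lam * I
  have hμ : normSq μ = 1 + lam ^ 2 := by simpa using normSq_add_mul_I 1 lam
  have hflat_eq : flat = realFlat μ ω := by
    ext v w
    simp [hflat, realFlat, μ]
  have hsharp_eq (f : Dual ℝ W) : c₁ f + lam • c₂ f = realSharp (conj μ) c f := by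
    rw [hc₁, hc₂, realSharp, smul_neg, ← sub_eq_add_neg, ← Complex.coe_smul, ← Complex.coe_smul,
      ← Complex.coe_smul, smul_smul, smul_smul, ← sub_smul]
    congr 1
    simp only [ofReal_inv, ofReal_ofNat, map_add, map_one, map_mul, conj_ofReal, conj_I, mul_neg,
      μ]
    ring
  have hleft : Function.LeftInverse c ω.flip :=
    Function.RightInverse.leftInverse_of_dual fun f ↦ LinearMap.ext (hc f)
  have sharp_flat (v : W) : realSharp (conj μ) c (realFlat μ ω v) = ((1 + lam ^ 2) / 4 : ℝ) • v :=
    hμ ▸ realSharp_conj_realFlat hleft μ v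
  have flat_sharp (f : Dual ℝ W) :
      realFlat μ ω (realSharp (conj μ) c f) = ((1 + lam ^ 2) / 4 : ℝ) • f :=
    hμ ▸ realFlat_realSharp_conj hc μ f
  simp only [hsharp_eq, hflat_eq]
  exact ⟨sharp_flat, Function.bijective_of_comp_eq_smul (by positivity) flat_sharp sharp_flat,
    flat_sharp⟩

/-- on a holomorphic symplectic manifold (M, ω) with c = ω⁻¹,
c₁ = Re c, c₂ = Im c, ω₁ = Re ω, ω₂ = Im ω, one has
(c₁ + λc₂)♯ ∘ (ω₁ − λω₂)♭ = ((1+λ²)/4)·id; in particular c₁ + λc₂ is a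
nondegenerate real bivector with inverse 2-form (4/(1+λ²))(ω₁ − λω₂).

Pointwise model: W is the (holomorphic) tangent space, a finite-dimensional
complex vector space; ω is a nondegenerate ℂ-bilinear alternating form with
inverse bivector c (ω w (c f) = f w); a real covector f corresponds to the
(1,0)-form f − i f(i·) = extendTo𝕜' f, and under the standard identification
Re c and Im c act on real covectors by
(Re c) f = ¼ c(f^{1,0}), (Im c) f = −¼ i·c(f^{1,0}), while
(ω₁ − λω₂)♭ v = Re(ω(·,v)) − λ Im(ω(·,v)). -/
theorem stmt9 (W : Type*) [AddCommGroup W] [Module ℂ W] [FiniteDimensional ℂ W]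
    (ω : W →ₗ[ℂ] W →ₗ[ℂ] ℂ) (halt : ∀ v : W, ω v v = 0)
    (c : Module.Dual ℂ W →ₗ[ℂ] W)
    (hc : ∀ (f : Module.Dual ℂ W) (w : W), ω w (c f) = f w)
    (c₁ c₂ : Module.Dual ℝ W → W)
    (hc₁ : ∀ f : Module.Dual ℝ W, c₁ f = (4⁻¹ : ℝ) • c (LinearMap.extendTo𝕜' f))
    (hc₂ : ∀ f : Module.Dual ℝ W,
      c₂ f = -((4⁻¹ : ℝ) • (Complex.I • c (LinearMap.extendTo𝕜' f))))
    (lam : ℝ)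
    (flat : W → Module.Dual ℝ W)
    (hflat : ∀ v : W, flat v
      = (Complex.reLm - lam • Complex.imLm) ∘ₗ ((ω.flip v).restrictScalars ℝ)) :
    (∀ v : W, c₁ (flat v) + lam • c₂ (flat v) = (((1 + lam ^ 2) / 4 : ℝ)) • v) ∧
    Function.Bijective (fun f : Module.Dual ℝ W => c₁ f + lam • c₂ f) ∧
    (∀ f : Module.Dual ℝ W,
      flat (c₁ f + lam • c₂ f) = ((1 + lam ^ 2) / 4 : ℝ) • f) :=
  stmt9_general W ω c hc c₁ c₂ hc₁ hc₂ lam flat hflat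
end

section
/- Let G₀ ⊂ G be a real form of a connected complex Lie group G with Lie algebras 𝔤₀ ⊂ 𝔤, and let 𝒪 be a G₀-orbit in 𝔤* through z₀ for the action (a+ib)·g = Ad*g(a) + i Ad*g(b). Then for each z ∈ 𝒪 there is an isomorphism T_z^{1,0}𝒪 ≅ 𝔤^z / (𝔤₀^z)^ℂ, where 𝔤^z and 𝔤₀^z are the stabilizer subalgebras of z in 𝔤 and 𝔤₀ respectively. -/
open Module

/-- let 𝔤₀ ⊆ 𝔤 be a real form of a complex Lie algebra
(ι : L₀ → L real Lie algebra embedding with L = ι(L₀) ⊕ i·ι(L₀)), z ∈ 𝔤* a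
point, 𝔤^z and 𝔤₀^z the coadjoint stabilizer subalgebras.  Then
T_z^{1,0}𝒪 ≅ 𝔤^z / (𝔤₀^z)^ℂ for the G₀-orbit 𝒪 through z: here T_z^{1,0}𝒪 is
realized (ℝ-linearly, via v ↦ v − i𝒥v) as
T_z𝒪 ∩ 𝒥T_z𝒪 = im(𝔤₀) ∩ i·im(𝔤₀) inside 𝔤/𝔤^z ≅ T_z(G·z). -/
theorem stmt18 (L₀ : Type*) [LieRing L₀] [LieAlgebra ℝ L₀]
    (L : Type*) [LieRing L] [LieAlgebra ℂ L]
    (ι : L₀ →ₗ[ℝ] L)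
    (hιb : ∀ x y : L₀, ι ⁅x, y⁆ = ⁅ι x, ι y⁆)
    (hspan : ∀ w : L, ∃ x y : L₀, w = ι x + Complex.I • ι y)
    (huniq : ∀ x y : L₀, ι x + Complex.I • ι y = 0 → x = 0 ∧ y = 0)
    (z : Module.Dual ℂ L)
    (gz : Submodule ℂ L) (hgz : (gz : Set L) = {w : L | ∀ u : L, z ⁅w, u⁆ = 0})
    (g0z : Submodule ℝ L₀)
    (hg0z : (g0z : Set L₀) = {x : L₀ | ∀ u : L, z ⁅ι x, u⁆ = 0}) :
    Nonempty
      ((↥gz ⧸ (Submodule.span ℂ (ι '' (g0z : Set L₀))).comap gz.subtype) ≃ₗ[ℝ]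
        ↥((LinearMap.range ((gz.mkQ.restrictScalars ℝ) ∘ₗ ι)) ⊓
          (LinearMap.range ((gz.mkQ.restrictScalars ℝ) ∘ₗ ι)).map
            ((Complex.I • (LinearMap.id : (L ⧸ gz) →ₗ[ℂ] (L ⧸ gz))).restrictScalars ℝ))) := by
  classical
  -- the real-linear map (x, y) ↦ ι x + I • ι y
  set J : L →ₗ[ℝ] L := (Complex.I • (LinearMap.id : L →ₗ[ℂ] L)).restrictScalars ℝ with hJ
  have hJapp : ∀ w : L, J w = Complex.I • w := fun w => rfl
  set e : (L₀ × L₀) →ₗ[ℝ] L :=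
    ι ∘ₗ LinearMap.fst ℝ L₀ L₀ + J ∘ₗ ι ∘ₗ LinearMap.snd ℝ L₀ L₀ with he
  have heapp : ∀ x y : L₀, e (x, y) = ι x + Complex.I • ι y := fun x y => rfl
  have hebij : Function.Bijective e := by
    constructor
    · rw [← LinearMap.ker_eq_bot, LinearMap.ker_eq_bot']
      rintro ⟨x, y⟩ h
      obtain ⟨hx, hy⟩ := huniq x y h
      simp [hx, hy, Prod.ext_iff]
    · intro w
      obtain ⟨x, y, hxy⟩ := hspan w
      exact ⟨(x, y), hxy.symm⟩
  set eL := LinearEquiv.ofBijective e hebij with heL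
  set p : L →ₗ[ℝ] L₀ := LinearMap.fst ℝ L₀ L₀ ∘ₗ (eL.symm : L →ₗ[ℝ] L₀ × L₀) with hp
  set q : L →ₗ[ℝ] L₀ := LinearMap.snd ℝ L₀ L₀ ∘ₗ (eL.symm : L →ₗ[ℝ] L₀ × L₀) with hq
  have hdecomp : ∀ w : L, ι (p w) + Complex.I • ι (q w) = w := by
    intro w
    have : e (eL.symm w) = w := eL.apply_symm_apply w
    simpa [heapp, hp, hq] using this
  have hpq : ∀ (w : L) (x y : L₀), w = ι x + Complex.I • ι y → p w = x ∧ q w = y := by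
    intro w x y h
    have : eL.symm w = (x, y) := by
      apply eL.injective
      rw [eL.apply_symm_apply]
      exact h.trans (heapp x y).symm
    constructor <;> simp [hp, hq, this]
  -- stabilizer characterization
  have hmem : ∀ x : L₀, ι x ∈ gz ↔ x ∈ g0z := by
    intro x
    rw [← SetLike.mem_coe, ← SetLike.mem_coe, hgz, hg0z]
    rfl
  -- the complex span of ι(g0z)
  have hspanle : ∀ w : L, w ∈ Submodule.span ℂ (ι '' (g0z : Set L₀)) ↔
      ∃ x ∈ g0z, ∃ y ∈ g0z, w = ι x + Complex.I • ι y := by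
    intro w
    constructor
    · intro hw
      induction hw using Submodule.span_induction with
      | mem w hw =>
        obtain ⟨x, hx, rfl⟩ := hw
        exact ⟨x, hx, 0, g0z.zero_mem, by simp⟩
      | zero => exact ⟨0, g0z.zero_mem, 0, g0z.zero_mem, by simp⟩
      | add a b _ _ iha ihb =>
        obtain ⟨x, hx, y, hy, rfl⟩ := iha
        obtain ⟨x', hx', y', hy', rfl⟩ := ihb
        refine ⟨x + x', g0z.add_mem hx hx', y + y', g0z.add_mem hy hy', ?_⟩
        simp [map_add, smul_add]
        abel
      | smul c a _ ih =>
        obtain ⟨x, hx, y, hy, rfl⟩ := ih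
        refine ⟨c.re • x - c.im • y, sub_mem (g0z.smul_mem _ hx) (g0z.smul_mem _ hy),
          c.im • x + c.re • y, add_mem (g0z.smul_mem _ hx) (g0z.smul_mem _ hy), ?_⟩
        have hre : ∀ (r : ℝ) (v : L), (r : ℂ) • v = r • v := fun r v => by
          rw [Complex.coe_smul]
        rw [map_sub, map_add, map_smul, map_smul, map_smul, map_smul]
        rw [← hre c.re (ι x), ← hre c.im (ι y), ← hre c.im (ι x), ← hre c.re (ι y)]
        have l : c • (ι x + Complex.I • ι y) = c • ι x + (c * Complex.I) • ι y := by
          rw [smul_add, smul_smul]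
        have r : ((c.re : ℂ) • ι x - (c.im : ℂ) • ι y) +
            Complex.I • ((c.im : ℂ) • ι x + (c.re : ℂ) • ι y) =
            ((c.re : ℂ) + Complex.I * (c.im : ℂ)) • ι x +
            (Complex.I * (c.re : ℂ) - (c.im : ℂ)) • ι y := by
          rw [add_smul, sub_smul, smul_add, smul_smul, smul_smul]
          abel
        rw [l, r]
        congr 1
        · congr 1
          apply Complex.ext <;> simp
        · congr 1
          apply Complex.ext <;> simp
    · rintro ⟨x, hx, y, hy, rfl⟩
      exact add_mem (Submodule.subset_span ⟨x, hx, rfl⟩)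
        (Submodule.smul_mem _ _ (Submodule.subset_span ⟨y, hy, rfl⟩))
  -- the map F : gz → L/gz
  set π : L →ₗ[ℝ] L ⧸ gz := gz.mkQ.restrictScalars ℝ with hπ
  set F : ↥gz →ₗ[ℝ] L ⧸ gz := π ∘ₗ ι ∘ₗ p ∘ₗ (gz.subtype.restrictScalars ℝ) with hF
  have hFapp : ∀ w : ↥gz, F w = π (ι (p (w : L))) := fun w => rfl
  have hπker : ∀ w : L, π w = 0 ↔ w ∈ gz := fun w => by
    simp [hπ, Submodule.Quotient.mk_eq_zero]
  set T : Submodule ℝ (L ⧸ gz) := LinearMap.range ((gz.mkQ.restrictScalars ℝ) ∘ₗ ι) with hT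
  set Jq : (L ⧸ gz) →ₗ[ℝ] (L ⧸ gz) :=
    (Complex.I • (LinearMap.id : (L ⧸ gz) →ₗ[ℂ] (L ⧸ gz))).restrictScalars ℝ with hJq
  -- range F = T ⊓ T.map Jq
  have hrange : LinearMap.range F = T ⊓ T.map Jq := by
    apply le_antisymm
    · rintro _ ⟨w, rfl⟩
      have hpi : π (ι (p (w : L))) = -(Complex.I • π (ι (q (w : L)))) := by
        have h0 : π (w : L) = 0 := (hπker _).2 w.2
        have h1 := congrArg π (hdecomp (w : L))
        rw [map_add, h0] at h1
        have hπI : π (Complex.I • ι (q (w : L))) = Complex.I • π (ι (q (w : L))) :=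
          map_smul gz.mkQ Complex.I _
        rw [hπI] at h1
        exact eq_neg_of_add_eq_zero_left h1
      refine ⟨⟨p (w : L), rfl⟩, ?_⟩
      refine ⟨π (ι (-(q (w : L)))), ⟨-(q (w : L)), rfl⟩, ?_⟩
      show Complex.I • π (ι (-(q (w : L)))) = π (ι (p (w : L)))
      rw [map_neg, map_neg, smul_neg, hpi]
    · rintro v ⟨⟨x, hxv⟩, ⟨-, ⟨y, rfl⟩, hyv⟩⟩
      -- v = π (ι x), v = I • π (ι y)
      have hxv' : π (ι x) = v := hxv
      have hyv' : Complex.I • π (ι y) = v := hyv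
      set w : L := ι x + Complex.I • ι (-y) with hw
      have hwz : w ∈ gz := by
        rw [← hπker]
        have hpw' : π w = π (ι x) + Complex.I • π (ι (-y)) := by
          rw [hw, map_add]
          try congr 1
          try exact map_smul gz.mkQ Complex.I _
        rw [hpw', hxv', map_neg, map_neg, smul_neg, hyv']
        simp
      obtain ⟨hpw, -⟩ := hpq w x (-y) rfl
      exact ⟨⟨w, hwz⟩, by show π (ι (p w)) = v; rw [hpw]; exact hxv'⟩
  -- ker F
  have hker : LinearMap.ker F =
      ((Submodule.span ℂ (ι '' (g0z : Set L₀))).comap gz.subtype).restrictScalars ℝ := by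
    ext w
    simp only [LinearMap.mem_ker, Submodule.restrictScalars_mem, Submodule.mem_comap,
      Submodule.subtype_apply]
    rw [hFapp, hπker, hspanle]
    constructor
    · intro h
      have hp0 : p (w : L) ∈ g0z := (hmem _).1 h
      have hq0 : q (w : L) ∈ g0z := by
        have hIq : Complex.I • ι (q (w : L)) ∈ gz := by
          have hd : Complex.I • ι (q (w : L)) = (w : L) - ι (p (w : L)) :=
            eq_sub_of_add_eq' (hdecomp (w : L))
          rw [hd]
          exact sub_mem w.2 h
        have : ι (q (w : L)) ∈ gz := by
          have := gz.smul_mem (-Complex.I) hIq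
          rwa [smul_smul, neg_mul, Complex.I_mul_I, neg_neg, one_smul] at this
        exact (hmem _).1 this
      exact ⟨p (w : L), hp0, q (w : L), hq0, (hdecomp (w : L)).symm⟩
    · rintro ⟨x, hx, y, hy, hxy⟩
      obtain ⟨hpw, -⟩ := hpq (w : L) x y hxy
      rw [hpw]
      exact (hmem _).2 hx
  -- assemble
  exact ⟨(((Submodule.Quotient.restrictScalarsEquiv ℝ
      ((Submodule.span ℂ (ι '' (g0z : Set L₀))).comap gz.subtype)).symm.trans
    (Submodule.quotEquivOfEq _ _ hker.symm)).trans
    F.quotKerEquivRange).trans (LinearEquiv.ofEq _ _ hrange)⟩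
end
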